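/- For every integer s, ∑_{n=0}^∞ L_{2n+s} / ((2n+1)·C_n) = 2·F_{s+1} + (4·√5·π·ω/25)·(2·F_s + α·F_{s−1}). -/

import Mathlib

/-- The golden ratio `α = (1+√5)/2`. -/
noncomputable def goldenAlpha : ℝ := (1 + Real.sqrt 5) / 2

/-- `β = (1-√5)/2`. -/
noncomputable def goldenBeta : ℝ := (1 - Real.sqrt 5) / 2

/-- Fibonacci numbers with integer index, via the Binet formula. -/
noncomputable def fibZ (s : ℤ) : ℝ := (goldenAlpha ^ s - goldenBeta ^ s) / Real.sqrt 5

/-- Lucas numbers with integer index, via the Binet formula. -/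
noncomputable def lucasZ (s : ℤ) : ℝ := goldenAlpha ^ s + goldenBeta ^ s

/-- `ω = √(√5·α)`. -/
noncomputable def omegaConst : ℝ := Real.sqrt (Real.sqrt 5 * goldenAlpha)

open intervalIntegral MeasureTheory Real

lemma catalan_pos'' (n : ℕ) : 0 < catalan n := by
  have h := succ_mul_catalan_eq_centralBinom n
  have h2 := Nat.centralBinom_pos n
  by_contra hc
  push_neg at hc
  interval_cases c : catalan n
  omega

lemma beta_nat : ∀ (b a : ℕ), ∫ t in (0:ℝ)..1, t ^ a * (1 - t) ^ b
    = (a.factorial * b.factorial : ℝ) / (a + b + 1).factorial := by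
  intro b
  induction b with
  | zero =>
    intro a
    rw [Nat.factorial_succ]
    simp [integral_pow]
    rw [eq_div_iff (by positivity)]
    push_cast
    field_simp
  | succ b ih =>
    intro a
    have hu : ∀ x : ℝ, HasDerivAt (fun t : ℝ => (1 - t) ^ (b+1))
        (-(((b:ℝ)+1) * (1 - x) ^ b)) x := by
      intro x
      have h1 : HasDerivAt (fun t : ℝ => 1 - t) (-1) x := by
        simpa using (hasDerivAt_id x).const_sub 1
      have := h1.pow (b+1)
      refine this.congr_deriv ?_
      push_cast
      ring
    have hv : ∀ x : ℝ, HasDerivAt (fun t : ℝ => t ^ (a+1) / ((a:ℝ)+1))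
        (x ^ a) x := by
      intro x
      have := (hasDerivAt_pow (a+1) x).div_const ((a:ℝ)+1)
      refine this.congr_deriv ?_
      have h : ((a:ℝ) + 1) ≠ 0 := by positivity
      field_simp
      push_cast
      simp
    have key := integral_mul_deriv_eq_deriv_mul_of_hasDerivAt
      (u := fun t : ℝ => (1 - t) ^ (b+1)) (v := fun t : ℝ => t ^ (a+1) / ((a:ℝ)+1))
      (u' := fun x : ℝ => -(((b:ℝ)+1) * (1 - x) ^ b)) (v' := fun x : ℝ => x ^ a)
      (a := (0:ℝ)) (b := 1)
      (by fun_prop) (by fun_prop)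
      (fun x _ => hu x) (fun x _ => hv x)
      ((Continuous.intervalIntegrable (by fun_prop : Continuous (fun x : ℝ => -(((b:ℝ)+1) * (1 - x) ^ b)))) 0 1)
      ((Continuous.intervalIntegrable (by fun_prop : Continuous (fun x : ℝ => x ^ a))) 0 1)
    have e1 : (∫ t in (0:ℝ)..1, t ^ a * (1 - t) ^ (b+1))
        = ∫ t in (0:ℝ)..1, (1 - t) ^ (b+1) * t ^ a := by
      congr 1; ext t; ring
    have e2 : (∫ x in (0:ℝ)..1, -(((b:ℝ)+1) * (1 - x) ^ b) * (x ^ (a+1) / ((a:ℝ)+1)))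
        = (-(((b:ℝ)+1) / ((a:ℝ)+1))) * ∫ x in (0:ℝ)..1, x ^ (a+1) * (1 - x) ^ b := by
      rw [← intervalIntegral.integral_const_mul]
      congr 1; ext x; ring
    rw [e1, key, e2, ih (a+1)]
    simp only [one_pow, sub_self, zero_pow (Nat.succ_ne_zero b), zero_pow (Nat.succ_ne_zero a),
      zero_mul, mul_zero, zero_div, sub_zero, zero_sub, mul_one]
    have h1 : ((a:ℝ) + 1) ≠ 0 := by positivity
    have h2 : ((a + 1 + b + 1).factorial : ℝ) ≠ 0 := by positivity
    have efac : a + (b+1) + 1 = a + 1 + b + 1 := by omega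
    rw [efac, Nat.factorial_succ a, Nat.factorial_succ b]
    push_cast
    field_simp

lemma catalan_nat_id (n : ℕ) :
    (2*n+1) * catalan n * ((n+1) * (n.factorial * n.factorial)) = (2*n+1).factorial := by
  have h1 : (n+1) * catalan n = n.centralBinom := succ_mul_catalan_eq_centralBinom n
  have h2 : n.centralBinom * n.factorial * n.factorial = (2*n).factorial := by
    rw [Nat.centralBinom]
    have := Nat.choose_mul_factorial_mul_factorial (n := 2*n) (k := n) (by omega)
    rw [show 2*n - n = n by omega] at this
    exact this
  have h3 : (2*n+1).factorial = (2*n+1) * (2*n).factorial := Nat.factorial_succ _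
  calc (2*n+1) * catalan n * ((n+1) * (n.factorial * n.factorial))
      = (2*n+1) * (((n+1) * catalan n) * n.factorial * n.factorial) := by ring
    _ = (2*n+1) * (2*n).factorial := by rw [h1, h2]
    _ = (2*n+1).factorial := h3.symm



lemma term_eq (y : ℝ) (n : ℕ) :
    (∫ t in (0:ℝ)..1, ((n:ℝ)+1) * (y * (t * (1-t)))^n) = y^n / ((2*(n:ℝ)+1) * catalan n) := by
  have e : ∀ t : ℝ, ((n:ℝ)+1) * (y * (t * (1-t)))^n = (((n:ℝ)+1) * y^n) * (t^n * (1-t)^n) := by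
    intro t; rw [mul_pow, mul_pow]; ring
  simp only [e]
  rw [intervalIntegral.integral_const_mul, beta_nat n n]
  have hid := catalan_nat_id n
  have hc : (0:ℝ) < catalan n := by exact_mod_cast catalan_pos'' n
  have h1 : (0:ℝ) < 2*(n:ℝ)+1 := by positivity
  have h2 : ((n + n + 1).factorial : ℝ) ≠ 0 := by positivity
  have hcast : ((2*(n:ℝ)+1) * catalan n) * (((n:ℝ)+1) * (n.factorial * n.factorial)) = ((n+n+1).factorial : ℝ) := by
    have : ((2*n+1) * catalan n * ((n+1) * (n.factorial * n.factorial)) : ℕ) = ((2*n+1).factorial : ℕ) := hid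
    have := congrArg (Nat.cast : ℕ → ℝ) this
    push_cast at this
    rw [show n + n + 1 = 2*n+1 by ring]
    push_cast
    linarith [this]
  field_simp
  linear_combination y^n * hcast

lemma D_pos {y : ℝ} (h0 : 0 < y) (h4 : y < 4) (t : ℝ) : 0 < 1 - y * (t * (1 - t)) := by
  nlinarith [mul_nonneg h0.le (sq_nonneg (2*t-1))]

lemma integral_inv_sq {y : ℝ} (h0 : 0 < y) (h4 : y < 4) :
    ∫ t in (0:ℝ)..1, ((1 - y * (t * (1 - t)))⁻¹) ^ 2
      = 2/(4-y) + 8 * Real.arctan (Real.sqrt y / Real.sqrt (4-y))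
          / ((4-y) * Real.sqrt (y*(4-y))) := by
  set s1 := Real.sqrt y with hs1def
  set s2 := Real.sqrt (4-y) with hs2def
  have h4y : (0:ℝ) < 4 - y := by linarith
  have hs1 : 0 < s1 := Real.sqrt_pos.mpr h0
  have hs2 : 0 < s2 := Real.sqrt_pos.mpr h4y
  have hs1sq : s1^2 = y := Real.sq_sqrt h0.le
  have hs2sq : s2^2 = 4 - y := Real.sq_sqrt h4y.le
  have hsmul : Real.sqrt (y*(4-y)) = s1 * s2 := Real.sqrt_mul h0.le _
  set k : ℝ := 4/((4-y)*(s1*s2)) with hkdef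
  set F : ℝ → ℝ := fun t => (2*t-1)/((4-y)*(1 - y*(t*(1-t))))
      + k * Real.arctan ((2*t-1)*(s1/s2)) with hFdef
  have hD : ∀ t : ℝ, 0 < 1 - y * (t * (1 - t)) := D_pos h0 h4
  have hderiv : ∀ t : ℝ, HasDerivAt F (((1 - y * (t * (1 - t)))⁻¹) ^ 2) t := by
    intro t
    have hDt : HasDerivAt (fun t : ℝ => 1 - y*(t*(1-t))) (y*(2*t-1)) t := by
      have hin : HasDerivAt (fun t : ℝ => t*(1-t)) (1 - 2*t) t := by
        have := (hasDerivAt_id t).mul ((hasDerivAt_const t (1:ℝ)).sub (hasDerivAt_id t))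
        refine this.congr_deriv ?_
        simp; ring
      have := (hin.const_mul y).const_sub 1
      refine this.congr_deriv ?_
      ring
    have hnum : HasDerivAt (fun t : ℝ => 2*t-1) 2 t := by
      simpa using ((hasDerivAt_id t).const_mul (2:ℝ)).sub_const 1
    have hden : HasDerivAt (fun t : ℝ => (4-y)*(1 - y*(t*(1-t)))) ((4-y)*(y*(2*t-1))) t :=
      hDt.const_mul (4-y)
    have hdenne : (4-y)*(1 - y*(t*(1-t))) ≠ 0 := ne_of_gt (mul_pos h4y (hD t))
    have h1 : HasDerivAt (fun t : ℝ => (2*t-1)/((4-y)*(1 - y*(t*(1-t)))))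
        ((2*((4-y)*(1 - y*(t*(1-t)))) - (2*t-1)*((4-y)*(y*(2*t-1))))
          / ((4-y)*(1 - y*(t*(1-t))))^2) t := hnum.div hden hdenne
    have hinner : HasDerivAt (fun t : ℝ => (2*t-1)*(s1/s2)) (2*(s1/s2)) t := by
      simpa using hnum.mul_const (s1/s2)
    have h2 : HasDerivAt (fun t : ℝ => Real.arctan ((2*t-1)*(s1/s2)))
        (1/(1+((2*t-1)*(s1/s2))^2) * (2*(s1/s2))) t :=
      by exact (Real.hasDerivAt_arctan ((2*t-1)*(s1/s2))).comp t hinner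
    have htot := h1.add (h2.const_mul k)
    refine htot.congr_deriv ?_
    have hd := hD t
    have hdne : 1 - y*(t*(1-t)) ≠ 0 := ne_of_gt hd
    have hs2ne : s2 ≠ 0 := ne_of_gt hs2
    have hs1ne : s1 ≠ 0 := ne_of_gt hs1
    have h4yne : 4 - y ≠ 0 := ne_of_gt h4y
    have h4dd : 1+((2*t-1)*(s1/s2))^2 = 4*(1 - y*(t*(1-t)))/s2^2 := by
      field_simp
      linear_combination hs2sq + (2*t-1)^2*hs1sq
    have e2 : k * (1 / (1 + ((2*t-1)*(s1/s2)) ^ 2) * (2*(s1/s2)))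
        = 2/((4-y)*(1 - y*(t*(1-t)))) := by
      rw [h4dd, hkdef]
      field_simp
    rw [e2]
    field_simp
    ring
  have hcont : Continuous fun t : ℝ => ((1 - y * (t * (1 - t)))⁻¹) ^ 2 := by
    have : Continuous fun t : ℝ => 1 - y * (t * (1 - t)) := by fun_prop
    exact (this.inv₀ (fun t => ne_of_gt (hD t))).pow 2
  have hFTC := intervalIntegral.integral_eq_sub_of_hasDerivAt
      (f := F) (f' := fun t => ((1 - y * (t * (1 - t)))⁻¹) ^ 2)
      (a := (0:ℝ)) (b := 1) (fun t _ => hderiv t)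
      (hcont.intervalIntegrable 0 1)
  rw [hFTC, hFdef, hsmul]
  simp only []
  rw [show (2*(1:ℝ)-1) = 1 by norm_num, show (2*(0:ℝ)-1) = -1 by norm_num]
  rw [show (1:ℝ) - y*(1*(1-1)) = 1 by ring, show (1:ℝ) - y*(0*(1-0)) = 1 by ring]
  rw [show (-1:ℝ)*(s1/s2) = -(1*(s1/s2)) by ring, Real.arctan_neg]
  rw [show (1:ℝ)*(s1/s2) = s1/s2 by ring]
  rw [hkdef]
  have hs2ne : s2 ≠ 0 := ne_of_gt hs2
  have hs1ne : s1 ≠ 0 := ne_of_gt hs1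
  have h4yne : (4-y) ≠ 0 := ne_of_gt h4y
  field_simp
  ring

lemma cb_lower (n : ℕ) : 4 ^ n ≤ (2*n+1) * ((n+1) * catalan n) := by
  rw [succ_mul_catalan_eq_centralBinom n]
  rcases Nat.eq_zero_or_pos n with h | h
  · simp [h, Nat.centralBinom]
  · calc 4 ^ n ≤ 2 * n * n.centralBinom := Nat.four_pow_le_two_mul_self_mul_centralBinom n h
      _ ≤ (2*n+1) * n.centralBinom := by
          exact Nat.mul_le_mul_right _ (by omega)

lemma term_le {y : ℝ} (h0 : 0 < y) (n : ℕ) :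
    y^n / ((2*(n:ℝ)+1) * catalan n) ≤ ((n:ℝ)+1) * (y/4)^n := by
  have hc : (0:ℝ) < catalan n := by exact_mod_cast catalan_pos'' n
  have h1 : (0:ℝ) < 2*(n:ℝ)+1 := by positivity
  have hlow : (4:ℝ)^n ≤ (2*(n:ℝ)+1) * (((n:ℝ)+1) * catalan n) := by
    have := cb_lower n
    exact_mod_cast this
  rw [div_le_iff₀ (by positivity), div_pow]
  rw [show ((n:ℝ)+1) * (y^n/4^n) * ((2*(n:ℝ)+1) * catalan n)
      = y^n * ((2*(n:ℝ)+1) * (((n:ℝ)+1) * catalan n)) / 4^n by ring]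
  rw [le_div_iff₀ (by positivity)]
  exact mul_le_mul_of_nonneg_left hlow (by positivity)

lemma summable_terms {y : ℝ} (h0 : 0 < y) (h4 : y < 4) :
    Summable (fun n : ℕ => y^n / ((2*(n:ℝ)+1) * catalan n)) := by
  have hr : ‖y/4‖ < 1 := by rw [Real.norm_eq_abs, abs_of_pos (by positivity)]; linarith
  have hs1 : Summable (fun n : ℕ => (n:ℝ) * (y/4)^n) := by
    simpa using summable_pow_mul_geometric_of_norm_lt_one 1 hr
  have hs2 : Summable (fun n : ℕ => (y/4)^n) := summable_geometric_of_norm_lt_one hr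
  have hs : Summable (fun n : ℕ => ((n:ℝ)+1) * (y/4)^n) := by
    have := hs1.add hs2
    apply this.congr
    intro n; ring
  apply Summable.of_nonneg_of_le _ (fun n => term_le h0 n) hs
  intro n
  have hc : (0:ℝ) < catalan n := by exact_mod_cast catalan_pos'' n
  positivity

lemma tsum_pointwise {y : ℝ} (h0 : 0 < y) (h4 : y < 4) {t : ℝ} (ht : t ∈ Set.Ioc (0:ℝ) 1) :
    HasSum (fun n : ℕ => ((n:ℝ)+1) * (y*(t*(1-t)))^n) (((1 - y * (t * (1 - t)))⁻¹) ^ 2) := by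
  set r := y*(t*(1-t)) with hr
  have hr0 : 0 ≤ r := by
    have : 0 ≤ t := le_of_lt ht.1
    have : 0 ≤ 1 - t := by linarith [ht.2]
    positivity
  have hr1 : r < 1 := by
    have := D_pos h0 h4 t
    linarith
  have hnorm : ‖r‖ < 1 := by rw [Real.norm_eq_abs, abs_of_nonneg hr0]; exact hr1
  have hA : HasSum (fun n : ℕ => (n:ℝ) * r^n) (r/(1-r)^2) :=
    hasSum_coe_mul_geometric_of_norm_lt_one hnorm
  have hB : HasSum (fun n : ℕ => r^n) ((1-r)⁻¹) := hasSum_geometric_of_norm_lt_one hnorm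
  have := hA.add hB
  have he : (fun n : ℕ => (n:ℝ) * r^n + r^n) = (fun n : ℕ => ((n:ℝ)+1) * r^n) := by
    funext n; ring
  rw [he] at this
  convert this using 1
  have h1r : (1:ℝ) - r ≠ 0 := by linarith
  field_simp
  ring


lemma key_hasSum {y : ℝ} (h0 : 0 < y) (h4 : y < 4) :
    HasSum (fun n : ℕ => y^n / ((2*(n:ℝ)+1) * catalan n))
      (2/(4-y) + 8 * Real.arctan (Real.sqrt y / Real.sqrt (4-y))
          / ((4-y) * Real.sqrt (y*(4-y)))) := by
  set μ : Measure ℝ := volume.restrict (Set.Ioc (0:ℝ) 1) with hμ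
  set F : ℕ → ℝ → ℝ := fun n t => ((n:ℝ)+1) * (y*(t*(1-t)))^n with hF
  have hFcont : ∀ n, Continuous (F n) := by intro n; fun_prop
  have hF_int : ∀ n, Integrable (F n) μ := by
    intro n
    rw [hμ]
    exact (hFcont n).integrableOn_Ioc
  have hF_nonneg : ∀ n, ∀ t ∈ Set.Ioc (0:ℝ) 1, 0 ≤ F n t := by
    intro n t ht
    have h1 : (0:ℝ) ≤ t := ht.1.le
    have h2 : (0:ℝ) ≤ 1 - t := by linarith [ht.2]
    positivity
  have hInt : ∀ n, ∫ t, F n t ∂μ = y^n / ((2*(n:ℝ)+1) * catalan n) := by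
    intro n
    rw [hμ, ← intervalIntegral.integral_of_le (by norm_num : (0:ℝ) ≤ 1)]
    exact term_eq y n
  have hIntNorm : ∀ n, ∫ t, ‖F n t‖ ∂μ = y^n / ((2*(n:ℝ)+1) * catalan n) := by
    intro n
    rw [← hInt n]
    apply MeasureTheory.integral_congr_ae
    rw [hμ]
    filter_upwards [ae_restrict_mem measurableSet_Ioc] with t ht
    exact Real.norm_of_nonneg (hF_nonneg n t ht)
  have hF_sum : Summable fun n => ∫ t, ‖F n t‖ ∂μ := by
    have := summable_terms h0 h4
    apply this.congr
    intro n
    exact (hIntNorm n).symm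
  have main := MeasureTheory.hasSum_integral_of_summable_integral_norm hF_int hF_sum
  have heq : (fun n => ∫ t, F n t ∂μ) = (fun n : ℕ => y^n / ((2*(n:ℝ)+1) * catalan n)) :=
    funext hInt
  rw [heq] at main
  have hval : (∫ t, (∑' n, F n t) ∂μ)
      = 2/(4-y) + 8 * Real.arctan (Real.sqrt y / Real.sqrt (4-y))
          / ((4-y) * Real.sqrt (y*(4-y))) := by
    have h1 : (∫ t, (∑' n, F n t) ∂μ)
        = ∫ t in Set.Ioc (0:ℝ) 1, ((1 - y * (t * (1 - t)))⁻¹) ^ 2 := by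
      rw [hμ]
      apply setIntegral_congr_fun measurableSet_Ioc
      intro t ht
      exact (tsum_pointwise h0 h4 ht).tsum_eq
    rw [h1, ← intervalIntegral.integral_of_le (by norm_num : (0:ℝ) ≤ 1)]
    exact integral_inv_sq h0 h4
  rwa [hval] at main

lemma sqrt5_sq : Real.sqrt 5 ^ 2 = 5 := Real.sq_sqrt (by norm_num)
lemma sqrt5_lt : (2:ℝ) < Real.sqrt 5 ∧ Real.sqrt 5 < 3 := by
  have h := sqrt5_sq
  have h0 : 0 ≤ Real.sqrt 5 := Real.sqrt_nonneg 5
  constructor <;> nlinarith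

lemma alpha_pos : 0 < goldenAlpha := by
  have := sqrt5_lt; unfold goldenAlpha; linarith [this.1]
lemma alpha_lt_two : goldenAlpha < 2 := by
  have := sqrt5_lt; unfold goldenAlpha; linarith [this.2]
lemma alpha_gt_one : 1 < goldenAlpha := by
  have := sqrt5_lt; unfold goldenAlpha; linarith [this.1]
lemma beta_neg : goldenBeta < 0 := by
  have := sqrt5_lt; unfold goldenBeta; linarith [this.1]
lemma beta_gt : -1 < goldenBeta := by
  have := sqrt5_lt; unfold goldenBeta; linarith [this.2]
lemma alpha_sq : goldenAlpha^2 = goldenAlpha + 1 := by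
  unfold goldenAlpha; have := sqrt5_sq; nlinarith
lemma beta_sq : goldenBeta^2 = goldenBeta + 1 := by
  unfold goldenBeta; have := sqrt5_sq; nlinarith
lemma alpha_mul_beta : goldenAlpha * goldenBeta = -1 := by
  unfold goldenAlpha goldenBeta; have := sqrt5_sq; nlinarith

lemma ya_pos : (0:ℝ) < goldenAlpha^2 := pow_pos alpha_pos 2
lemma ya_lt : goldenAlpha^2 < 4 := by nlinarith [alpha_lt_two, alpha_pos]
lemma yb_pos : (0:ℝ) < goldenBeta^2 := by
  nlinarith [beta_neg]
lemma yb_lt : goldenBeta^2 < 4 := by nlinarith [beta_neg, beta_gt]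

lemma cos_pi_five : Real.cos (π/5) = goldenAlpha / 2 := by
  rw [Real.cos_pi_div_five]; unfold goldenAlpha; ring

lemma sin_pi_five : Real.sin (π/5) = Real.sqrt (4 - goldenAlpha^2) / 2 := by
  have hpi : (0:ℝ) < π := Real.pi_pos
  rw [Real.sin_eq_sqrt_one_sub_cos_sq (by positivity) (by linarith), cos_pi_five]
  rw [show 1 - (goldenAlpha/2)^2 = (4 - goldenAlpha^2)/4 by ring]
  rw [Real.sqrt_div (by linarith [ya_lt]) 4,
    show Real.sqrt (4:ℝ) = 2 by rw [show (4:ℝ)=2^2 by norm_num, Real.sqrt_sq (by norm_num)]]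

lemma arctan_alpha :
    Real.arctan (Real.sqrt (goldenAlpha^2) / Real.sqrt (4 - goldenAlpha^2)) = 3*π/10 := by
  have h4 : (0:ℝ) < 4 - goldenAlpha^2 := by linarith [ya_lt]
  have hpi : (0:ℝ) < π := Real.pi_pos
  have hsin : 0 < Real.sin (π/5) := by
    rw [sin_pi_five]; positivity
  have htan : Real.tan (3*π/10) = Real.sqrt (goldenAlpha^2) / Real.sqrt (4 - goldenAlpha^2) := by
    rw [show 3*π/10 = π/2 - π/5 by ring, Real.tan_pi_div_two_sub, Real.tan_eq_sin_div_cos,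
      cos_pi_five, sin_pi_five, Real.sqrt_sq alpha_pos.le]
    have h' : 0 < Real.sqrt (4-goldenAlpha^2) := Real.sqrt_pos.mpr h4
    rw [inv_div]
    have ha := alpha_pos
    field_simp
  rw [← htan, Real.arctan_tan (by linarith) (by linarith)]

lemma cos_two_pi_five : Real.cos (2*π/5) = -goldenBeta / 2 := by
  have : (2*π/5) = 2*(π/5) := by ring
  rw [this, Real.cos_two_mul, cos_pi_five]
  have := alpha_sq
  unfold goldenAlpha goldenBeta at *
  nlinarith [sqrt5_sq]

lemma sin_two_pi_five : Real.sin (2*π/5) = Real.sqrt (4 - goldenBeta^2) / 2 := by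
  have hpi : (0:ℝ) < π := Real.pi_pos
  rw [Real.sin_eq_sqrt_one_sub_cos_sq (by positivity) (by linarith), cos_two_pi_five]
  rw [show 1 - (-goldenBeta/2)^2 = (4 - goldenBeta^2)/4 by ring]
  rw [Real.sqrt_div (by linarith [yb_lt]) 4,
    show Real.sqrt (4:ℝ) = 2 by rw [show (4:ℝ)=2^2 by norm_num, Real.sqrt_sq (by norm_num)]]

lemma arctan_beta :
    Real.arctan (Real.sqrt (goldenBeta^2) / Real.sqrt (4 - goldenBeta^2)) = π/10 := by
  have h4 : (0:ℝ) < 4 - goldenBeta^2 := by linarith [yb_lt]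
  have hpi : (0:ℝ) < π := Real.pi_pos
  have hsin : 0 < Real.sin (2*π/5) := by
    rw [sin_two_pi_five]; positivity
  have hb : Real.sqrt (goldenBeta^2) = -goldenBeta := by
    rw [Real.sqrt_sq_eq_abs, abs_of_neg beta_neg]
  have htan : Real.tan (π/10) = Real.sqrt (goldenBeta^2) / Real.sqrt (4 - goldenBeta^2) := by
    rw [show π/10 = π/2 - 2*π/5 by ring, Real.tan_pi_div_two_sub, Real.tan_eq_sin_div_cos,
      cos_two_pi_five, sin_two_pi_five, hb]
    have h' : 0 < Real.sqrt (4-goldenBeta^2) := Real.sqrt_pos.mpr h4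
    rw [inv_div]
    have hbneg := beta_neg
    field_simp
  rw [← htan, Real.arctan_tan (by linarith) (by linarith)]


lemma omega_pos : 0 < omegaConst := by
  unfold omegaConst
  apply Real.sqrt_pos.mpr
  have := alpha_pos
  have h5 : (0:ℝ) < Real.sqrt 5 := by have := sqrt5_lt.1; linarith
  positivity

lemma omega_sq : omegaConst^2 = Real.sqrt 5 * goldenAlpha := by
  unfold omegaConst
  apply Real.sq_sqrt
  have := alpha_pos
  have h5 : (0:ℝ) < Real.sqrt 5 := by have := sqrt5_lt.1; linarith
  positivity

lemma four_sub_ya : (4 - goldenAlpha^2) * goldenAlpha = Real.sqrt 5 := by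
  unfold goldenAlpha
  have := sqrt5_sq
  nlinarith

lemma four_sub_yb : 4 - goldenBeta^2 = Real.sqrt 5 * goldenAlpha := by
  unfold goldenAlpha goldenBeta
  have := sqrt5_sq
  nlinarith

lemma sqrt_prod_a : Real.sqrt (goldenAlpha^2 * (4 - goldenAlpha^2)) = omegaConst := by
  have ha := alpha_pos
  rw [show goldenAlpha^2 * (4 - goldenAlpha^2) = Real.sqrt 5 * goldenAlpha by
    nlinarith [four_sub_ya]]
  rfl

lemma sqrt_prod_b : Real.sqrt (goldenBeta^2 * (4 - goldenBeta^2)) = omegaConst / goldenAlpha := by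
  have ha := alpha_pos
  have hw := omega_pos
  rw [show goldenBeta^2 * (4 - goldenBeta^2) = (omegaConst / goldenAlpha)^2 by
    rw [div_pow, omega_sq, four_sub_yb]
    have hb2 : goldenBeta^2 * goldenAlpha^2 = 1 := by
      nlinarith [alpha_mul_beta]
    field_simp
    linear_combination hb2]
  exact Real.sqrt_sq (by positivity)

lemma key5_a : (4 - goldenAlpha^2) * omegaConst^2 = 5 := by
  rw [omega_sq]
  linear_combination Real.sqrt 5 * four_sub_ya + sqrt5_sq

lemma VA_eq : 2/(4-goldenAlpha^2) + 8 * Real.arctan (Real.sqrt (goldenAlpha^2) / Real.sqrt (4-goldenAlpha^2))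
      / ((4-goldenAlpha^2) * Real.sqrt (goldenAlpha^2*(4-goldenAlpha^2)))
    = 2*goldenAlpha/Real.sqrt 5 + 12*Real.pi*omegaConst/25 := by
  rw [arctan_alpha, sqrt_prod_a]
  have ha := alpha_pos
  have hw := omega_pos
  have hv : (0:ℝ) < Real.sqrt 5 := by have := sqrt5_lt.1; linarith
  have h4 : (0:ℝ) < 4 - goldenAlpha^2 := by linarith [ya_lt]
  have t1 : 2/(4-goldenAlpha^2) = 2*goldenAlpha/Real.sqrt 5 := by
    rw [div_eq_div_iff (by positivity) (by positivity)]
    linear_combination (-2) * four_sub_ya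
  have t2 : 8 * (3*Real.pi/10) / ((4-goldenAlpha^2) * omegaConst) = 12*Real.pi*omegaConst/25 := by
    rw [div_eq_div_iff (by positivity) (by norm_num : (25:ℝ) ≠ 0)]
    linear_combination (-12 * Real.pi) * key5_a
  rw [t1, t2]

lemma VB_eq : 2/(4-goldenBeta^2) + 8 * Real.arctan (Real.sqrt (goldenBeta^2) / Real.sqrt (4-goldenBeta^2))
      / ((4-goldenBeta^2) * Real.sqrt (goldenBeta^2*(4-goldenBeta^2)))
    = -2*goldenBeta/Real.sqrt 5 + 4*Real.pi*omegaConst/(25*goldenAlpha) := by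
  rw [arctan_beta, sqrt_prod_b]
  have ha := alpha_pos
  have hb := beta_neg
  have hw := omega_pos
  have hv : (0:ℝ) < Real.sqrt 5 := by have := sqrt5_lt.1; linarith
  have h4 : (0:ℝ) < 4 - goldenBeta^2 := by linarith [yb_lt]
  have hd : (4-goldenBeta^2) * (omegaConst/goldenAlpha) = Real.sqrt 5 * omegaConst := by
    rw [four_sub_yb]
    field_simp
  have t1 : 2/(4-goldenBeta^2) = -2*goldenBeta/Real.sqrt 5 := by
    rw [div_eq_div_iff (by positivity) (by positivity), four_sub_yb]
    linear_combination (2*Real.sqrt 5) * alpha_mul_beta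
  have t2 : 8 * (Real.pi/10) / ((4-goldenBeta^2) * (omegaConst/goldenAlpha)) = 4*Real.pi*omegaConst/(25*goldenAlpha) := by
    rw [hd, div_eq_div_iff (by positivity) (by positivity)]
    linear_combination (-4*Real.pi*Real.sqrt 5) * omega_sq + (-4*Real.pi*goldenAlpha) * sqrt5_sq
  rw [t1, t2]

lemma zpow_split (x : ℝ) (hx : x ≠ 0) (s : ℤ) (n : ℕ) :
    x ^ (2*(n:ℤ)+s) = (x^2)^n * x^s := by
  rw [zpow_add₀ hx, zpow_mul]
  norm_cast

/-- For every integer `s`,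
`∑_{n=0}^∞ L_{2n+s}/((2n+1)·C_n) = 2·F_{s+1} + (4√5·π·ω/25)·(2F_s + α·F_{s-1})`. -/
theorem lucas_catalan_sum (s : ℤ) :
    ∑' n : ℕ, lucasZ (2 * (n : ℤ) + s) / ((2 * (n : ℝ) + 1) * (catalan n : ℝ))
      = 2 * fibZ (s + 1)
        + 4 * Real.sqrt 5 * Real.pi * omegaConst / 25
          * (2 * fibZ s + goldenAlpha * fibZ (s - 1)) := by
  have ha := alpha_pos
  have hb := beta_neg
  have hv : (0:ℝ) < Real.sqrt 5 := by have := sqrt5_lt.1; linarith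
  have hane : goldenAlpha ≠ 0 := ne_of_gt ha
  have hbne : goldenBeta ≠ 0 := ne_of_lt hb
  have hvne : Real.sqrt 5 ≠ 0 := ne_of_gt hv
  have hA := key_hasSum ya_pos ya_lt
  have hB := key_hasSum yb_pos yb_lt
  rw [VA_eq] at hA
  rw [VB_eq] at hB
  have hAB := (hA.mul_left (goldenAlpha^s)).add (hB.mul_left (goldenBeta^s))
  have hterm : (fun n : ℕ => goldenAlpha^s * ((goldenAlpha^2)^n / ((2*(n:ℝ)+1) * catalan n))
        + goldenBeta^s * ((goldenBeta^2)^n / ((2*(n:ℝ)+1) * catalan n)))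
      = (fun n : ℕ => lucasZ (2 * (n : ℤ) + s) / ((2 * (n : ℝ) + 1) * (catalan n : ℝ))) := by
    funext n
    unfold lucasZ
    rw [zpow_split _ hane, zpow_split _ hbne]
    ring
  rw [hterm] at hAB
  rw [hAB.tsum_eq]
  unfold fibZ
  rw [zpow_add_one₀ hane, zpow_add_one₀ hbne, zpow_sub_one₀ hane, zpow_sub_one₀ hbne]
  set X := goldenAlpha^s with hX
  set Y := goldenBeta^s with hY
  set A := goldenAlpha
  set B := goldenBeta
  set w := omegaConst
  set v := Real.sqrt 5
  have eqA : 2*A/v + 12*Real.pi*w/25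
      = 2*A/v + 4*v*Real.pi*w/25 * (2/v + A*A⁻¹/v) := by
    field_simp
    ring
  have eqB : -2*B/v + 4*Real.pi*w/(25*A)
      = -2*B/v - 4*v*Real.pi*w/25 * (2/v + A*B⁻¹/v) := by
    have hab : A*B = -1 := alpha_mul_beta
    have hs : A^2 = A + 1 := alpha_sq
    have hsum : A + B = 1 := by
      show goldenAlpha + goldenBeta = 1
      unfold goldenAlpha goldenBeta
      ring
    have hcore : (2 + A*B⁻¹) = -A⁻¹ := by
      field_simp
      linear_combination hsum + 2*hab + hs
    have hstep : 4*v*Real.pi*w/25 * (2/v + A*B⁻¹/v) = (4*Real.pi*w/25) * (2 + A*B⁻¹) := by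
      field_simp
    rw [hstep, hcore]
    field_simp
    ring
  calc X * (2*A/v + 12*Real.pi*w/25) + Y * (-2*B/v + 4*Real.pi*w/(25*A))
      = X * (2*A/v + 4*v*Real.pi*w/25 * (2/v + A*A⁻¹/v))
        + Y * (-2*B/v - 4*v*Real.pi*w/25 * (2/v + A*B⁻¹/v)) := by rw [← eqA, ← eqB]
    _ = 2 * ((X * A - Y * B) / v)
        + 4 * v * Real.pi * w / 25 * (2 * ((X - Y) / v) + A * ((X * A⁻¹ - Y * B⁻¹) / v)) := by
      ring
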